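/- For any edge uv in a finite simple graph G with domination number γ(G), the bondage number satisfies b(G) ≤ d(u) + d(v) − 1 − |N(u) ∩ N(v)|, where d denotes vertex degree and N denotes (open) neighbourhood. -/

import Mathlib

open SimpleGraph Finset

/-- A dominating set of a finite simple graph: every vertex not in `D` has a neighbour in `D`. -/
def DominatingSet {V : Type*} [Fintype V] (G : SimpleGraph V) (D : Finset V) : Prop :=
  ∀ v ∉ D, ∃ u ∈ D, G.Adj u v

/-- The domination number: minimum size of a dominating set. -/
noncomputable def domNum {V : Type*} [Fintype V] (G : SimpleGraph V) : ℕ :=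
  sInf {n | ∃ D : Finset V, DominatingSet G D ∧ D.card = n}

/-- The bondage number: minimum size of a set of edges whose removal increases the
domination number. -/
noncomputable def bondage {V : Type*} [Fintype V] (G : SimpleGraph V) : ℕ :=
  sInf {n | ∃ B : Finset (Sym2 V), ↑B ⊆ G.edgeSet ∧ B.card = n ∧
    domNum (G.deleteEdges ↑B) > domNum G}

/-!
Delete the `d(u)` edges at `u` together with the edges `vw` with `w ∉ N[u]`; there are
`d(v) - 1 - |N(u) ∩ N(v)|` of the latter. In the resulting graph `u` is isolated and every
neighbour of `v` lies in `N(u)`. A minimum dominating set `D` of it must contain `u`, and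
`D \ {u}` still dominates `G`: `u` is dominated through `v` or through the vertex of `D` that
dominates `v`. Hence the domination number went up.
-/

section Domination

variable {V : Type*} [Fintype V]

theorem domNum_le_card {G : SimpleGraph V} {D : Finset V} (hD : DominatingSet G D) :
    domNum G ≤ D.card :=
  Nat.sInf_le ⟨D, hD, rfl⟩

theorem exists_dominatingSet_card_eq_domNum (G : SimpleGraph V) :
    ∃ D : Finset V, DominatingSet G D ∧ D.card = domNum G :=
  Nat.sInf_mem (s := {n | ∃ D : Finset V, DominatingSet G D ∧ D.card = n})
    ⟨univ.card, univ, fun w hw => absurd (mem_univ w) hw, rfl⟩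

theorem bondage_le_card {G : SimpleGraph V} {B : Finset (Sym2 V)} (hB : ↑B ⊆ G.edgeSet)
    (hlt : domNum G < domNum (G.deleteEdges ↑B)) : bondage G ≤ B.card :=
  Nat.sInf_le ⟨B, hB, rfl, hlt⟩

theorem domNum_lt_of_isolated {G H : SimpleGraph V} (hHG : H ≤ G) {u v : V} (huv : G.Adj u v)
    (hu : ∀ w, ¬H.Adj u w) (hv : ∀ x, H.Adj x v → G.Adj u x) : domNum G < domNum H := by
  classical
  obtain ⟨D, hD, hcard⟩ := exists_dominatingSet_card_eq_domNum H
  have huD : u ∈ D := by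
    by_contra huD
    obtain ⟨x, -, hxu⟩ := hD u huD
    exact hu x hxu.symm
  have hdom : DominatingSet G (D.erase u) := by
    intro w hw
    by_cases hwu : w = u
    · subst hwu
      by_cases hvD : v ∈ D
      · exact ⟨v, mem_erase.mpr ⟨huv.ne', hvD⟩, huv.symm⟩
      · obtain ⟨x, hxD, hxv⟩ := hD v hvD
        have hwx := hv x hxv
        exact ⟨x, mem_erase.mpr ⟨hwx.ne', hxD⟩, hwx.symm⟩
    · obtain ⟨x, hxD, hxw⟩ := hD w fun hwD => hw (mem_erase.mpr ⟨hwu, hwD⟩)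
      have hxu : x ≠ u := by
        rintro rfl
        exact hu w hxw
      exact ⟨x, mem_erase.mpr ⟨hxu, hxD⟩, hHG hxw⟩
  have := domNum_le_card hdom
  rw [card_erase_of_mem huD] at this
  have := card_pos.mpr ⟨u, huD⟩
  omega

end Domination

theorem card_neighborFinset_sdiff_insert {V : Type*} [Fintype V] [DecidableEq V]
    (G : SimpleGraph V) [DecidableRel G.Adj] {u v : V} (huv : G.Adj u v) :
    ((G.neighborFinset v \ insert u (G.neighborFinset u)).card : ℤ) =
      G.degree v - 1 - (G.neighborFinset u ∩ G.neighborFinset v).card := by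
  have hu : u ∈ G.neighborFinset v \ G.neighborFinset u := by simp [huv.symm]
  have hsplit := card_sdiff_add_card_inter (G.neighborFinset v) (G.neighborFinset u)
  rw [sdiff_insert, card_erase_of_mem hu, inter_comm]
  have := card_pos.mpr ⟨u, hu⟩
  rw [← card_neighborFinset_eq_degree]
  omega

theorem stmt0 {V : Type*} [Fintype V] [DecidableEq V] (G : SimpleGraph V)
    [DecidableRel G.Adj] (u v : V) (huv : G.Adj u v) :
    (bondage G : ℤ) ≤
      G.degree u + G.degree v - 1 - (G.neighborFinset u ∩ G.neighborFinset v).card := by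
  set W := G.neighborFinset v \ insert u (G.neighborFinset u)
  set B := G.incidenceFinset u ∪ W.image (s(v, ·))
  have hincident : ∀ w, G.Adj u w → s(u, w) ∈ B := fun w huw =>
    mem_union_left _ ((G.mem_incidenceFinset u _).mpr ⟨huw, Sym2.mem_mk_left _ _⟩)
  have hB : ↑B ⊆ G.edgeSet := by
    intro e he
    simp only [B, coe_union, coe_image, coe_incidenceFinset] at he
    rcases he with he | ⟨w, hw, rfl⟩
    · exact G.incidenceSet_subset u he
    · exact (mem_neighborFinset G v w).mp (mem_sdiff.mp hw).1
  have hlt : domNum G < domNum (G.deleteEdges ↑B) := by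
    refine domNum_lt_of_isolated (G.deleteEdges_le _) huv (fun w huw => ?_) (fun x hxv => ?_)
    · rw [deleteEdges_adj] at huw
      exact huw.2 (hincident w huw.1)
    · rw [deleteEdges_adj] at hxv
      by_contra hux
      have hxu : x ≠ u := by
        rintro rfl
        exact hxv.2 (hincident v hxv.1)
      refine hxv.2 (mem_union_right _ (mem_image.mpr ⟨x, ?_, Sym2.eq_swap⟩))
      simp [W, hxv.1.symm, hxu, hux]
  calc (bondage G : ℤ) ≤ B.card := by exact_mod_cast bondage_le_card hB hlt
    _ ≤ G.degree u + W.card := by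
      have : B.card ≤ _ := card_union_le _ _
      have := card_image_le (s := W) (f := (s(v, ·)))
      rw [← card_incidenceFinset_eq_degree]
      omega
    _ = _ := by rw [card_neighborFinset_sdiff_insert G huv]; ring
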